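/- arXiv:2309.11030 — 7 statements merged into one kernel-verified Lean document; each statement's English description precedes it below -/
import Mathlib

section
/- Every maximal abelian Lie subalgebra of so(3,1) is 2-dimensional: if h is a Lie subalgebra of so(3,1) over ℝ such that h is abelian and every abelian Lie subalgebra h' of so(3,1) with h ≤ h' equals h, then the finrank over ℝ of h is 2. -/
/-- The matrix `J = diag(1,1,1,-1)` defining the Lorentz form of signature (3,1). -/
noncomputable def lorentzJ : Matrix (Fin 4) (Fin 4) ℝ :=
  Matrix.diagonal ![1, 1, 1, -1]

attribute [local instance 100] LieRing.ofAssociativeRing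

/-- The real Lie algebra `so(3,1)` of matrices `Y` with `Yᵀ ⬝ J = -J ⬝ Y`. -/
noncomputable def so31 : LieSubalgebra ℝ (Matrix (Fin 4) (Fin 4) ℝ) :=
  skewAdjointMatricesLieSubalgebra lorentzJ

/-!
As a real Lie algebra, `so(3,1)` is `ℂ³` with the complex cross product as bracket. Over a field,
`v ⨯₃ w = 0` with `v ≠ 0` forces `w ∈ ℂ ∙ v`, so the centralizer of a nonzero element `X` is the
complex line through it: an abelian subalgebra of real dimension 2. A maximal abelian subalgebra
contains some `X ≠ 0` (the zero subalgebra lies in any such line), hence lies in the centralizer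
of `X`, and maximality makes it equal to it.
-/

open Matrix

lemma cross_eq_zero_iff_mem_span_singleton {F : Type*} [Field F] {v w : Fin 3 → F} (hv : v ≠ 0) :
    v ⨯₃ w = 0 ↔ w ∈ F ∙ v := by
  rw [← not_iff_not, ← ne_eq, crossProduct_ne_zero_iff_linearIndependent,
    LinearIndependent.pair_iff' hv, Submodule.mem_span_singleton, not_exists]

theorem LieSubalgebra.toSubmodule_eq_of_maximal_abelian {R L : Type*} [CommRing R] [LieRing L]
    [LieAlgebra R L] (h : LieSubalgebra R L)
    (hmax : ∀ h' : LieSubalgebra R L, (∀ X ∈ h', ∀ Y ∈ h', ⁅X, Y⁆ = 0) → h ≤ h' → h' = h)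
    (V : Submodule R L) (hV : ∀ X ∈ V, ∀ Y ∈ V, ⁅X, Y⁆ = 0) (hle : h.toSubmodule ≤ V) :
    h.toSubmodule = V := by
  let h' : LieSubalgebra R L :=
    { V with lie_mem' := fun hx hy => (hV _ hx _ hy).symm ▸ V.zero_mem }
  exact congrArg LieSubalgebra.toSubmodule (hmax h' hV hle).symm

lemma mem_so31_iff {Y : Matrix (Fin 4) (Fin 4) ℝ} :
    Y ∈ so31 ↔ ∀ i j, Y j i * ![1, 1, 1, -1] j = -(![1, 1, 1, -1] i * Y i j) := by
  rw [so31, mem_skewAdjointMatricesLieSubalgebra, mem_skewAdjointMatricesSubmodule,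
    Matrix.IsSkewAdjoint, Matrix.IsAdjointPair, lorentzJ, ← Matrix.ext_iff]
  simp only [Matrix.mul_diagonal, Matrix.diagonal_mul, Matrix.transpose_apply, Matrix.neg_apply,
    mul_neg]

/-- `a + i b` goes to the generator with rotation part `a` and boost part `b`; this is the
realification of `so(3, ℂ) ≅ (ℂ³, ⨯₃)`, see `complexToSo31_lie`. -/
def complexToSo31Matrix (z : Fin 3 → ℂ) : Matrix (Fin 4) (Fin 4) ℝ :=
  !![0, -(z 2).re, (z 1).re, (z 0).im;
     (z 2).re, 0, -(z 0).re, (z 1).im;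
     -(z 1).re, (z 0).re, 0, (z 2).im;
     (z 0).im, (z 1).im, (z 2).im, 0]

lemma complexToSo31Matrix_mem (z : Fin 3 → ℂ) : complexToSo31Matrix z ∈ so31 := by
  rw [mem_so31_iff]
  intro i j
  fin_cases i <;> fin_cases j <;> simp [complexToSo31Matrix]

lemma eq_complexToSo31Matrix {Y : Matrix (Fin 4) (Fin 4) ℝ} (hY : Y ∈ so31) :
    complexToSo31Matrix ![⟨Y 2 1, Y 0 3⟩, ⟨Y 0 2, Y 1 3⟩, ⟨Y 1 0, Y 2 3⟩] = Y := by
  rw [mem_so31_iff] at hY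
  ext i j
  have hij := hY i j
  have hii := hY i i
  fin_cases i <;> fin_cases j <;> simp [complexToSo31Matrix] at hij hii ⊢ <;> linarith

noncomputable def complexToSo31 : (Fin 3 → ℂ) ≃ₗ[ℝ] so31 where
  toFun z := ⟨complexToSo31Matrix z, complexToSo31Matrix_mem z⟩
  map_add' z w := by
    ext i j
    fin_cases i <;> fin_cases j <;> simp [complexToSo31Matrix] <;> ring
  map_smul' c z := by
    ext i j
    fin_cases i <;> fin_cases j <;> simp [complexToSo31Matrix]
  invFun Y := ![⟨Y.1 2 1, Y.1 0 3⟩, ⟨Y.1 0 2, Y.1 1 3⟩, ⟨Y.1 1 0, Y.1 2 3⟩]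
  left_inv z := by
    ext k; fin_cases k <;> simp [complexToSo31Matrix]
  right_inv Y := Subtype.ext (eq_complexToSo31Matrix Y.2)

lemma complexToSo31_lie (z w : Fin 3 → ℂ) :
    ⁅complexToSo31 z, complexToSo31 w⁆ = complexToSo31 (z ⨯₃ w) := by
  apply Subtype.ext
  rw [LieSubalgebra.coe_bracket, Ring.lie_def]
  ext i j
  fin_cases i <;> fin_cases j <;>
    simp [complexToSo31, complexToSo31Matrix, cross_apply] <;> ring

noncomputable def so31ComplexLine (z : Fin 3 → ℂ) : Submodule ℝ so31 :=
  ((ℂ ∙ z).restrictScalars ℝ).map complexToSo31.toLinearMap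

lemma mem_so31ComplexLine_iff {z : Fin 3 → ℂ} (hz : z ≠ 0) {Y : so31} :
    Y ∈ so31ComplexLine z ↔ ⁅complexToSo31 z, Y⁆ = 0 := by
  rw [so31ComplexLine, Submodule.mem_map_equiv, Submodule.restrictScalars_mem,
    ← cross_eq_zero_iff_mem_span_singleton hz, ← complexToSo31.map_eq_zero_iff,
    ← complexToSo31_lie, LinearEquiv.apply_symm_apply]

lemma lie_eq_zero_of_mem_so31ComplexLine {z : Fin 3 → ℂ} {X Y : so31}
    (hX : X ∈ so31ComplexLine z) (hY : Y ∈ so31ComplexLine z) : ⁅X, Y⁆ = 0 := by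
  obtain ⟨_, hx, rfl⟩ := hX
  obtain ⟨_, hy, rfl⟩ := hY
  obtain ⟨a, rfl⟩ := Submodule.mem_span_singleton.mp hx
  obtain ⟨b, rfl⟩ := Submodule.mem_span_singleton.mp hy
  simp [complexToSo31_lie, cross_self]

lemma finrank_so31ComplexLine {z : Fin 3 → ℂ} (hz : z ≠ 0) :
    Module.finrank ℝ (so31ComplexLine z) = 2 := by
  rw [so31ComplexLine, LinearEquiv.finrank_map_eq]
  change Module.finrank ℝ (ℂ ∙ z) = 2
  rw [← Module.finrank_mul_finrank ℝ ℂ, Complex.finrank_real_complex, finrank_span_singleton hz]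

/-- Every maximal abelian Lie subalgebra of `so(3,1)` is 2-dimensional. -/
theorem stmt1 (h : LieSubalgebra ℝ so31)
    (habelian : ∀ X ∈ h, ∀ Y ∈ h, ⁅X, Y⁆ = 0)
    (hmax : ∀ h' : LieSubalgebra ℝ so31,
      (∀ X ∈ h', ∀ Y ∈ h', ⁅X, Y⁆ = 0) → h ≤ h' → h' = h) :
    Module.finrank ℝ h = 2 := by
  have finrank_eq_two_of_commutes : ∀ z : Fin 3 → ℂ, z ≠ 0 →
      (∀ Y ∈ h, ⁅complexToSo31 z, Y⁆ = 0) → Module.finrank ℝ h = 2 := by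
    intro z hz hzh
    have heq := h.toSubmodule_eq_of_maximal_abelian hmax (so31ComplexLine z)
      (fun X hX Y hY => lie_eq_zero_of_mem_so31ComplexLine hX hY)
      (fun Y hY => (mem_so31ComplexLine_iff hz).mpr (hzh Y hY))
    rw [← finrank_so31ComplexLine hz, ← heq]
    rfl
  by_cases hbot : ∃ X ∈ h, X ≠ 0
  · obtain ⟨X, hX, hX0⟩ := hbot
    refine finrank_eq_two_of_commutes (complexToSo31.symm X) (by simpa using hX0) ?_
    simpa using habelian X hX
  · push Not at hbot
    exact finrank_eq_two_of_commutes (Pi.single 0 1) (by simp) (fun Y hY => by simp [hbot Y hY])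
end

section
/- The polynomials C₁ = x₃² − x₄² + x₁x₅ + x₂x₆ and C₂ = 2x₃x₄ + x₂x₅ − x₁x₆ are Casimir invariants of 𝔠(2): for every polynomial p ∈ ℝ[x₁,…,x₆] one has {C₁, p} = 0 and {C₂, p} = 0 for the Lie–Poisson bracket of 𝔠(2). -/
/-!
The map `{q, ·}` is a derivation, so it vanishes identically as soon as it vanishes on the
generators `x_k`; and `{C, x_k} = ∑_j c_{jk} ∂C/∂x_j` is checked to be zero for each `k` by
direct computation.
-/

open MvPolynomial

/-- Structure-constant polynomials `c j k = {x_{j+1}, x_{k+1}}` of the 2D conformal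
algebra `𝔠(2)` (indices `0,…,5` correspond to `x₁,…,x₆`). -/
noncomputable def c2Mat : Matrix (Fin 6) (Fin 6) (MvPolynomial (Fin 6) ℝ) :=
  !![0,            0,            -X 1, X 0,  2 * X 3,      2 * X 2;
     0,            0,            X 0,  X 1,  -(2 * X 2),   2 * X 3;
     X 1,          -X 0,         0,    0,    X 5,          -X 4;
     -X 0,         -X 1,         0,    0,    X 4,          X 5;
     -(2 * X 3),   2 * X 2,      -X 5, -X 4, 0,            0;
     -(2 * X 2),   -(2 * X 3),   X 4,  -X 5, 0,            0]

/-- The Lie–Poisson bracket of `𝔠(2)` on `ℝ[x₁,…,x₆]`: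
`{p,q} = ∑_{j,k} c_{jk} (∂p/∂x_j) (∂q/∂x_k)`. -/
noncomputable def pb (p q : MvPolynomial (Fin 6) ℝ) : MvPolynomial (Fin 6) ℝ :=
  ∑ j : Fin 6, ∑ k : Fin 6, c2Mat j k * pderiv j p * pderiv k q

theorem Derivation.map_ofNat {R A M : Type*} [CommSemiring R] [CommSemiring A] [Algebra R A]
    [AddCommMonoid M] [Module A M] [Module R M] [IsScalarTower R A M] (D : Derivation R A M)
    (n : ℕ) [n.AtLeastTwo] : D (ofNat(n) : A) = 0 := by
  rw [← Nat.cast_ofNat, D.map_natCast]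

lemma pb_X_right (q : MvPolynomial (Fin 6) ℝ) (k : Fin 6) :
    pb q (X k) = ∑ j, c2Mat j k * pderiv j q := by
  simp [pb, pderiv_X, Pi.single_apply, mul_comm]

lemma pb_eq_sum_pb_X_mul_pderiv (q p : MvPolynomial (Fin 6) ℝ) :
    pb q p = ∑ k, pb q (X k) * pderiv k p := by
  simp only [pb_X_right, Finset.sum_mul]
  exact Finset.sum_comm

lemma pb_eq_zero_of_forall_pb_X_eq_zero {q : MvPolynomial (Fin 6) ℝ}
    (h : ∀ k, pb q (X k) = 0) (p : MvPolynomial (Fin 6) ℝ) : pb q p = 0 := by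
  simp [pb_eq_sum_pb_X_mul_pderiv q p, h]

noncomputable def casimirOne : MvPolynomial (Fin 6) ℝ :=
  X 2 ^ 2 - X 3 ^ 2 + X 0 * X 4 + X 1 * X 5

noncomputable def casimirTwo : MvPolynomial (Fin 6) ℝ :=
  2 * X 2 * X 3 + X 1 * X 4 - X 0 * X 5

lemma pb_casimirOne_X (k : Fin 6) : pb casimirOne (X k) = 0 := by
  rw [pb_X_right, casimirOne]
  fin_cases k <;> simp [c2Mat, Fin.sum_univ_six, pderiv_X, Pi.single_apply] <;> ring

lemma pb_casimirTwo_X (k : Fin 6) : pb casimirTwo (X k) = 0 := by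
  rw [pb_X_right, casimirTwo]
  fin_cases k <;>
    simp [c2Mat, Fin.sum_univ_six, pderiv_X, Pi.single_apply, Derivation.map_ofNat] <;> ring

/-- `C₁ = x₃² − x₄² + x₁x₅ + x₂x₆` and `C₂ = 2x₃x₄ + x₂x₅ − x₁x₆` are Casimir
invariants of `𝔠(2)`. -/
theorem stmt3 (p : MvPolynomial (Fin 6) ℝ) :
    pb (X 2 ^ 2 - X 3 ^ 2 + X 0 * X 4 + X 1 * X 5) p = 0 ∧
    pb (2 * X 2 * X 3 + X 1 * X 4 - X 0 * X 5) p = 0 :=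
  ⟨pb_eq_zero_of_forall_pb_X_eq_zero pb_casimirOne_X p,
    pb_eq_zero_of_forall_pb_X_eq_zero pb_casimirTwo_X p⟩
end

section
/- The Poisson commutant of the maximal Abelian subalgebra a₍₁₂₎ = span{x₁,x₂} of 𝔠(2) is Abelian: if p, q ∈ ℝ[x₁,…,x₆] satisfy {p,x₁} = {p,x₂} = 0 and {q,x₁} = {q,x₂} = 0, then {p,q} = 0. -/
/-!
Write `v = ∇p`, `w = ∇q` and `C = (c_{jk})`, so that `{p, q} = vᵀ C w` and `{p, xᵢ} = (vᵀ C)ᵢ`.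
Over the fraction field, the conditions `(vᵀ C)₁ = (vᵀ C)₂ = 0` cut out `span(e₁, e₂) ⊕ ker C`,
and the antisymmetric form `C` vanishes on it because `c₁₂ = 0`. The decomposition only
divides by `x₁² + x₂²`, the determinant (up to sign) of the block of `C` in rows `x₃, x₄` and
columns `x₁, x₂`. So `(x₁² + x₂²) {p, q}` is an explicit combination of the four hypotheses,
and `ℝ[x₁,…,x₆]` is a domain.
-/

open MvPolynomial

open Matrix

namespace MvPolynomial

variable {σ R : Type*} [CommSemiring R]

noncomputable def grad (p : MvPolynomial σ R) : σ → MvPolynomial σ R :=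
  fun i => pderiv i p

end MvPolynomial

theorem pb_eq_dotProduct_mulVec (p q : MvPolynomial (Fin 6) ℝ) :
    pb p q = grad p ⬝ᵥ (c2Mat *ᵥ grad q) := by
  simp only [pb, dotProduct, mulVec, Finset.mul_sum, grad]
  exact Finset.sum_congr rfl fun _ _ => Finset.sum_congr rfl fun _ _ => by ring

theorem pb_X (p : MvPolynomial (Fin 6) ℝ) (k : Fin 6) :
    pb p (X k) = (grad p ᵥ* c2Mat) k := by
  simp [pb, vecMul, dotProduct, grad, pderiv_X, Pi.single_apply, mul_comm]

theorem sq_add_sq_mul_dotProduct_c2Mat_mulVec_eq_zero {v w : Fin 6 → MvPolynomial (Fin 6) ℝ}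
    (hv₀ : (v ᵥ* c2Mat) 0 = 0) (hv₁ : (v ᵥ* c2Mat) 1 = 0)
    (hw₀ : (w ᵥ* c2Mat) 0 = 0) (hw₁ : (w ᵥ* c2Mat) 1 = 0) :
    (X 0 ^ 2 + X 1 ^ 2) * (v ⬝ᵥ (c2Mat *ᵥ w)) = 0 := by
  simp only [vecMul, mulVec, dotProduct, Fin.sum_univ_six, c2Mat, of_apply, cons_val, cons_val',
    cons_val_zero, cons_val_one, empty_val', cons_val_fin_one] at *
  -- The multiplier of `hv₀` (resp. `hv₁`) is `X 0 ^ 2 + X 1 ^ 2` times the coordinate of `w`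
  -- along `e 0` (resp. `e 1`) in the decomposition `span (e 0, e 1) ⊕ ker c2Mat`.
  linear_combination
      ((X 0 ^ 2 + X 1 ^ 2) * w 0
        - ((X 0 * X 4 - X 1 * X 5) * w 4 + (X 1 * X 4 + X 0 * X 5) * w 5)) * hv₀
      + ((X 0 ^ 2 + X 1 ^ 2) * w 1
        - ((X 0 * X 5 + X 1 * X 4) * w 4 + (X 1 * X 5 - X 0 * X 4) * w 5)) * hv₁
      + (-(X 0 ^ 2 + X 1 ^ 2) * v 0
        + ((X 0 * X 4 - X 1 * X 5) * v 4 + (X 1 * X 4 + X 0 * X 5) * v 5)) * hw₀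
      + (-(X 0 ^ 2 + X 1 ^ 2) * v 1
        + ((X 0 * X 5 + X 1 * X 4) * v 4 + (X 1 * X 5 - X 0 * X 4) * v 5)) * hw₁

theorem X_zero_sq_add_X_one_sq_ne_zero : (X 0 ^ 2 + X 1 ^ 2 : MvPolynomial (Fin 6) ℝ) ≠ 0 := by
  intro h
  simpa using congrArg (eval fun _ => (1 : ℝ)) h

theorem dotProduct_c2Mat_mulVec_eq_zero {v w : Fin 6 → MvPolynomial (Fin 6) ℝ}
    (hv₀ : (v ᵥ* c2Mat) 0 = 0) (hv₁ : (v ᵥ* c2Mat) 1 = 0)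
    (hw₀ : (w ᵥ* c2Mat) 0 = 0) (hw₁ : (w ᵥ* c2Mat) 1 = 0) :
    v ⬝ᵥ (c2Mat *ᵥ w) = 0 :=
  (mul_eq_zero.mp (sq_add_sq_mul_dotProduct_c2Mat_mulVec_eq_zero hv₀ hv₁ hw₀ hw₁)).resolve_left
    X_zero_sq_add_X_one_sq_ne_zero

/-- The Poisson commutant of `a₍₁₂₎ = span{x₁,x₂}` is Abelian. -/
theorem stmt4 (p q : MvPolynomial (Fin 6) ℝ)
    (hp1 : pb p (X 0) = 0) (hp2 : pb p (X 1) = 0)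
    (hq1 : pb q (X 0) = 0) (hq2 : pb q (X 1) = 0) :
    pb p q = 0 := by
  rw [pb_X] at hp1 hp2 hq1 hq2
  rw [pb_eq_dotProduct_mulVec]
  exact dotProduct_c2Mat_mulVec_eq_zero hp1 hp2 hq1 hq2
end

section
/- The Poisson commutant of the maximal Abelian subalgebra a₍₅₆₎ = span{x₅,x₆} of 𝔠(2) is Abelian: if p, q ∈ ℝ[x₁,…,x₆] satisfy {p,x₅} = {p,x₆} = 0 and {q,x₅} = {q,x₆} = 0, then {p,q} = 0. -/
/-!
The conditions `{p,x₅} = {p,x₆} = 0` form a linear system for `(∂₃p, ∂₄p)` with matrix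
`[[x₆, x₅], [-x₅, x₆]]` of determinant `ρ = x₅² + x₆²`. Eliminating these derivatives of `p` and
`q` by Cramer's rule gives an identity `ρ·{p,q} = A{p,x₅} + B{p,x₆} + C{q,x₅} + D{q,x₆}` with
polynomial coefficients, so `ρ·{p,q} = 0`; since `ρ ≠ 0` in the domain `ℝ[x₁,…,x₆]`, `{p,q} = 0`.
-/

open MvPolynomial

theorem pb_apply (p q : MvPolynomial (Fin 6) ℝ) :
    pb p q =
      -X 1 * (pderiv 0 p * pderiv 2 q - pderiv 2 p * pderiv 0 q)
      + X 0 * (pderiv 0 p * pderiv 3 q - pderiv 3 p * pderiv 0 q)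
      + 2 * X 3 * (pderiv 0 p * pderiv 4 q - pderiv 4 p * pderiv 0 q)
      + 2 * X 2 * (pderiv 0 p * pderiv 5 q - pderiv 5 p * pderiv 0 q)
      + X 0 * (pderiv 1 p * pderiv 2 q - pderiv 2 p * pderiv 1 q)
      + X 1 * (pderiv 1 p * pderiv 3 q - pderiv 3 p * pderiv 1 q)
      - 2 * X 2 * (pderiv 1 p * pderiv 4 q - pderiv 4 p * pderiv 1 q)
      + 2 * X 3 * (pderiv 1 p * pderiv 5 q - pderiv 5 p * pderiv 1 q)
      + X 5 * (pderiv 2 p * pderiv 4 q - pderiv 4 p * pderiv 2 q)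
      - X 4 * (pderiv 2 p * pderiv 5 q - pderiv 5 p * pderiv 2 q)
      + X 4 * (pderiv 3 p * pderiv 4 q - pderiv 4 p * pderiv 3 q)
      + X 5 * (pderiv 3 p * pderiv 5 q - pderiv 5 p * pderiv 3 q) := by
  simp only [pb, c2Mat, Fin.sum_univ_six, Matrix.of_apply, Matrix.cons_val, Matrix.cons_val_zero,
    Matrix.cons_val_one]
  ring

theorem pb_X_four (p : MvPolynomial (Fin 6) ℝ) :
    pb p (X 4) = 2 * X 3 * pderiv 0 p - 2 * X 2 * pderiv 1 p
      + X 5 * pderiv 2 p + X 4 * pderiv 3 p := by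
  simp [pb_apply, pderiv_X]

theorem pb_X_five (p : MvPolynomial (Fin 6) ℝ) :
    pb p (X 5) = 2 * X 2 * pderiv 0 p + 2 * X 3 * pderiv 1 p
      - X 4 * pderiv 2 p + X 5 * pderiv 3 p := by
  simp [pb_apply, pderiv_X]

theorem sq_add_sq_mul_pb (p q : MvPolynomial (Fin 6) ℝ) :
    (X 4 ^ 2 + X 5 ^ 2) * pb p q =
      ((X 4 ^ 2 + X 5 ^ 2) * pderiv 4 q + (X 1 * X 5 - X 0 * X 4) * pderiv 0 q
        - (X 0 * X 5 + X 1 * X 4) * pderiv 1 q) * pb p (X 4)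
      + ((X 4 ^ 2 + X 5 ^ 2) * pderiv 5 q - (X 1 * X 4 + X 0 * X 5) * pderiv 0 q
        + (X 0 * X 4 - X 1 * X 5) * pderiv 1 q) * pb p (X 5)
      - ((X 4 ^ 2 + X 5 ^ 2) * pderiv 4 p + (X 1 * X 5 - X 0 * X 4) * pderiv 0 p
        - (X 0 * X 5 + X 1 * X 4) * pderiv 1 p) * pb q (X 4)
      - ((X 4 ^ 2 + X 5 ^ 2) * pderiv 5 p - (X 1 * X 4 + X 0 * X 5) * pderiv 0 p
        + (X 0 * X 4 - X 1 * X 5) * pderiv 1 p) * pb q (X 5) := by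
  rw [pb_X_four, pb_X_five, pb_X_four, pb_X_five, pb_apply]
  ring

theorem X_four_sq_add_X_five_sq_ne_zero : (X 4 ^ 2 + X 5 ^ 2 : MvPolynomial (Fin 6) ℝ) ≠ 0 := by
  intro h
  simpa using congrArg (eval fun _ ↦ (1 : ℝ)) h

/-- The Poisson commutant of `a₍₅₆₎ = span{x₅,x₆}` is Abelian. -/
theorem stmt6 (p q : MvPolynomial (Fin 6) ℝ)
    (hp1 : pb p (X 4) = 0) (hp2 : pb p (X 5) = 0)
    (hq1 : pb q (X 4) = 0) (hq2 : pb q (X 5) = 0) :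
    pb p q = 0 := by
  have h := sq_add_sq_mul_pb p q
  rw [hp1, hp2, hq1, hq2] at h
  simp only [mul_zero, add_zero, sub_zero] at h
  exact (mul_eq_zero.1 h).resolve_left X_four_sq_add_X_five_sq_ne_zero
end

section
/- For the 2-dimensional non-Abelian subalgebra a₍₁₄₎ = span{x₁,x₄} of 𝔠(2) (with {x₁,x₄} = x₁), the three polynomials φ₁ = x₁x₅ − x₄², φ₂ = x₂x₆ + x₃², φ₃ = x₁x₆ − 2x₃x₄ − x₂x₅ all lie in the Poisson commutant of a₍₁₄₎ and pairwise Poisson-commute: {φᵢ, x₁} = {φᵢ, x₄} = 0 for i = 1,2,3, and {φᵢ, φⱼ} = 0 for all 1 ≤ i, j ≤ 3. -/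
open MvPolynomial

/-- The three quadratic invariants of the non-Abelian subalgebra
`a₍₁₄₎ = span{x₁,x₄}`. -/
noncomputable def phi14 : Fin 3 → MvPolynomial (Fin 6) ℝ :=
  ![X 0 * X 4 - X 3 ^ 2,
    X 1 * X 5 + X 2 ^ 2,
    X 0 * X 5 - 2 * X 2 * X 3 - X 1 * X 4]

/-! The bracket is `∑ c_{jk} ∂_j p ∂_k q` for an antisymmetric matrix `c`, so it is antisymmetric
and `{p, p} = 0`. This leaves the six brackets of the `φᵢ` with `x₁, x₄` and the three brackets
`{φᵢ, φⱼ}` with `i < j`, each a direct polynomial identity. -/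

namespace MvPolynomial

variable {σ R : Type*} [CommRing R]

@[simp] theorem pderiv_ofNat (i : σ) (n : ℕ) [n.AtLeastTwo] :
    pderiv i (ofNat(n) : MvPolynomial σ R) = 0 := by
  rw [← map_ofNat C n, pderiv_C]

variable [Fintype σ]

noncomputable def matrixBracket (c : Matrix σ σ (MvPolynomial σ R)) (p q : MvPolynomial σ R) :
    MvPolynomial σ R :=
  ∑ j, ∑ k, c j k * pderiv j p * pderiv k q

theorem matrixBracket_X_right [DecidableEq σ] (c : Matrix σ σ (MvPolynomial σ R))
    (p : MvPolynomial σ R) (k : σ) :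
    matrixBracket c p (X k) = ∑ j, c j k * pderiv j p := by
  simp [matrixBracket, pderiv_X, Pi.single_apply]

theorem matrixBracket_swap {c : Matrix σ σ (MvPolynomial σ R)} (hc : c.transpose = -c)
    (p q : MvPolynomial σ R) : matrixBracket c q p = -matrixBracket c p q := by
  rw [matrixBracket, Finset.sum_comm, matrixBracket, ← Finset.sum_neg_distrib]
  refine Finset.sum_congr rfl fun j _ => ?_
  rw [← Finset.sum_neg_distrib]
  refine Finset.sum_congr rfl fun k _ => ?_
  rw [show c k j = -c j k from congrFun (congrFun hc j) k]
  ring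

theorem matrixBracket_self [IsDomain R] [CharZero R] {c : Matrix σ σ (MvPolynomial σ R)}
    (hc : c.transpose = -c) (p : MvPolynomial σ R) : matrixBracket c p p = 0 :=
  CharZero.eq_neg_self_iff.mp (matrixBracket_swap hc p p)

end MvPolynomial

theorem pb_eq_matrixBracket : pb = matrixBracket c2Mat := rfl

theorem c2Mat_transpose : c2Mat.transpose = -c2Mat := by
  ext i j
  fin_cases i <;> fin_cases j <;> simp [c2Mat]

theorem pb_swap (p q : MvPolynomial (Fin 6) ℝ) : pb q p = -pb p q :=
  matrixBracket_swap c2Mat_transpose p q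

theorem pb_self (p : MvPolynomial (Fin 6) ℝ) : pb p p = 0 :=
  matrixBracket_self c2Mat_transpose p

theorem pb_phi14_X_eq_zero (i : Fin 3) {k : Fin 6} (hk : k = 0 ∨ k = 3) :
    pb (phi14 i) (X k) = 0 := by
  rw [pb_eq_matrixBracket, matrixBracket_X_right]
  rcases hk with rfl | rfl <;> fin_cases i <;>
    simp [c2Mat, phi14, Fin.sum_univ_six, pderiv_X, Pi.single_apply] <;> ring

theorem pb_phi14_of_lt {i j : Fin 3} (hij : i < j) : pb (phi14 i) (phi14 j) = 0 := by
  fin_cases i <;> fin_cases j <;> try contradiction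
  all_goals simp [pb, c2Mat, phi14, Fin.sum_univ_six, pderiv_X, Pi.single_apply]; ring

/-- `φ₁, φ₂, φ₃` lie in the Poisson commutant of `a₍₁₄₎` and pairwise
Poisson-commute. -/
theorem stmt8 :
    (∀ i : Fin 3, pb (phi14 i) (X 0) = 0) ∧
    (∀ i : Fin 3, pb (phi14 i) (X 3) = 0) ∧
    (∀ i j : Fin 3, pb (phi14 i) (phi14 j) = 0) := by
  refine ⟨fun i => pb_phi14_X_eq_zero i (.inl rfl), fun i => pb_phi14_X_eq_zero i (.inr rfl),
    fun i j => ?_⟩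
  rcases lt_trichotomy i j with hij | rfl | hji
  · exact pb_phi14_of_lt hij
  · exact pb_self (phi14 i)
  · rw [pb_swap, pb_phi14_of_lt hji, neg_zero]
end

section
/- Casimir functions of the quadratic Poisson algebra Q₃(2): with A₁ = x₃, A₂ = x₄, A₃ = x₁² + x₂², A₄ = x₁x₅ + x₂x₆, A₅ = x₁x₆ − x₂x₅, A₆ = x₅² + x₆², each of the four polynomials K₁ = A₁, K₂ = A₄ − A₂², K₃ = A₅ − 2A₁A₂, K₄ = A₄² + A₅² − A₃A₆ satisfies {Kᵢ, Aⱼ} = 0 for every 1 ≤ j ≤ 6. -/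
open MvPolynomial

/-- Generators of the quadratic Poisson algebra `Q₃(2)`. -/
noncomputable def A3 : Fin 6 → MvPolynomial (Fin 6) ℝ :=
  ![X 2,
    X 3,
    X 0 ^ 2 + X 1 ^ 2,
    X 0 * X 4 + X 1 * X 5,
    X 0 * X 5 - X 1 * X 4,
    X 4 ^ 2 + X 5 ^ 2]

lemma cons_val_five' {α : Type*} {m : ℕ} (x : α) (u : Fin (m+5) → α) :
    Matrix.vecCons x u 5 =
      Matrix.vecHead (Matrix.vecTail (Matrix.vecTail (Matrix.vecTail (Matrix.vecTail u)))) := rfl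

lemma pderiv_two' (i : Fin 6) : pderiv i (2 : MvPolynomial (Fin 6) ℝ) = 0 := by
  rw [show (2 : MvPolynomial (Fin 6) ℝ) = C 2 from (map_ofNat C 2).symm, pderiv_C]

set_option maxHeartbeats 4000000 in
/-- Casimir functions of the quadratic Poisson algebra `Q₃(2)`. -/
theorem stmt12 :
    (∀ j : Fin 6, pb (A3 0) (A3 j) = 0) ∧
    (∀ j : Fin 6, pb (A3 3 - A3 1 ^ 2) (A3 j) = 0) ∧
    (∀ j : Fin 6, pb (A3 4 - 2 * A3 0 * A3 1) (A3 j) = 0) ∧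
    (∀ j : Fin 6, pb (A3 3 ^ 2 + A3 4 ^ 2 - A3 2 * A3 5) (A3 j) = 0) := by
  refine ⟨?_, ?_, ?_, ?_⟩ <;> intro j <;> fin_cases j <;>
  simp [pb, c2Mat, A3, Fin.sum_univ_six, pderiv_X, Matrix.cons_val_four, cons_val_five',
    pderiv_mul, pderiv_pow, pderiv_two', Matrix.vecHead, Matrix.vecTail] <;> ring
end

section
/- The quadratic Poisson algebra Q_{e(2)}(2) from the Casimir K₁₂₃ = x₁² + x₂² of the Euclidean subalgebra a₍₁₂₃₎ = span{x₁,x₂,x₃}: set A₁ = x₁, A₂ = x₂, A₃ = x₃, A₄ = x₁x₅ + x₂x₆ − x₄², A₅ = x₁x₆ − x₂x₅ − 2x₃x₄. Then {Aⱼ, K₁₂₃} = 0 for all 1 ≤ j ≤ 5; {A₅, Aⱼ} = 0 for all j; and {A₁, A₂} = 0, {A₁, A₃} = −A₂, {A₂, A₃} = A₁, {A₁, A₄} = 2A₂A₃, {A₂, A₄} = −2A₁A₃, {A₃, A₄} = 0. -/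
open MvPolynomial

/-- Generators of the quadratic Poisson algebra `Q_{e(2)}(2)`:
`A₁ = x₁, A₂ = x₂, A₃ = x₃, A₄ = x₁x₅ + x₂x₆ − x₄², A₅ = x₁x₆ − x₂x₅ − 2x₃x₄`. -/
noncomputable def Ae : Fin 5 → MvPolynomial (Fin 6) ℝ :=
  ![X 0,
    X 1,
    X 2,
    X 0 * X 4 + X 1 * X 5 - X 3 ^ 2,
    X 0 * X 5 - X 1 * X 4 - 2 * X 2 * X 3]

/-! Any bracket `{p, q} = ∑ c_{jk} ∂_j p ∂_k q` is a biderivation, so it is determined by its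
values `c_{jk}` on the coordinates. Expanding each bracket of the theorem by the Leibniz rule
reduces it to the structure constants of `𝔠(2)`, and the identity becomes one of polynomials. -/

namespace MvPolynomial

variable {σ R : Type*} [Fintype σ]

noncomputable def pderivBracket [CommSemiring R] (c : Matrix σ σ (MvPolynomial σ R))
    (p q : MvPolynomial σ R) : MvPolynomial σ R :=
  ∑ j, ∑ k, c j k * pderiv j p * pderiv k q

section CommSemiring

variable [CommSemiring R] (c : Matrix σ σ (MvPolynomial σ R)) (p q r : MvPolynomial σ R)

theorem pderivBracket_add_left :
    pderivBracket c (p + q) r = pderivBracket c p r + pderivBracket c q r := by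
  simp only [pderivBracket, map_add, mul_add, add_mul, Finset.sum_add_distrib]

theorem pderivBracket_add_right :
    pderivBracket c p (q + r) = pderivBracket c p q + pderivBracket c p r := by
  simp only [pderivBracket, map_add, mul_add, Finset.sum_add_distrib]

theorem pderivBracket_mul_left :
    pderivBracket c (p * q) r = pderivBracket c p r * q + p * pderivBracket c q r := by
  simp only [pderivBracket, pderiv_mul, Finset.sum_mul, Finset.mul_sum, ← Finset.sum_add_distrib]
  exact Fintype.sum_congr _ _ fun j => Fintype.sum_congr _ _ fun k => by ring

theorem pderivBracket_mul_right :
    pderivBracket c p (q * r) = pderivBracket c p q * r + q * pderivBracket c p r := by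
  simp only [pderivBracket, pderiv_mul, Finset.sum_mul, Finset.mul_sum, ← Finset.sum_add_distrib]
  exact Fintype.sum_congr _ _ fun j => Fintype.sum_congr _ _ fun k => by ring

theorem pderivBracket_ofNat_left (n : ℕ) [n.AtLeastTwo] : pderivBracket c (ofNat(n)) q = 0 := by
  rw [← Nat.cast_ofNat (R := MvPolynomial σ R) (n := n)]
  simp only [pderivBracket, Derivation.map_natCast, mul_zero, zero_mul, Finset.sum_const_zero]

theorem pderivBracket_ofNat_right (n : ℕ) [n.AtLeastTwo] : pderivBracket c p (ofNat(n)) = 0 := by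
  rw [← Nat.cast_ofNat (R := MvPolynomial σ R) (n := n)]
  simp only [pderivBracket, Derivation.map_natCast, mul_zero, Finset.sum_const_zero]

theorem pderivBracket_X_X (j k : σ) : pderivBracket c (X j) (X k) = c j k := by
  classical
  simp [pderivBracket, pderiv_X, Pi.single_apply]

end CommSemiring

section CommRing

variable [CommRing R] (c : Matrix σ σ (MvPolynomial σ R)) (p q r : MvPolynomial σ R)

theorem pderivBracket_sub_left :
    pderivBracket c (p - q) r = pderivBracket c p r - pderivBracket c q r := by
  simp only [pderivBracket, map_sub, mul_sub, sub_mul, Finset.sum_sub_distrib]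

theorem pderivBracket_sub_right :
    pderivBracket c p (q - r) = pderivBracket c p q - pderivBracket c p r := by
  simp only [pderivBracket, map_sub, mul_sub, Finset.sum_sub_distrib]

end CommRing

end MvPolynomial

theorem pb_eq_pderivBracket (p q : MvPolynomial (Fin 6) ℝ) : pb p q = pderivBracket c2Mat p q :=
  rfl

/-- The quadratic Poisson algebra `Q_{e(2)}(2)` from the Casimir
`K₁₂₃ = x₁² + x₂²` of the Euclidean subalgebra `a₍₁₂₃₎`. -/
theorem stmt17 :
    (∀ j : Fin 5, pb (Ae j) (X 0 ^ 2 + X 1 ^ 2) = 0) ∧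
    (∀ j : Fin 5, pb (Ae 4) (Ae j) = 0) ∧
    pb (Ae 0) (Ae 1) = 0 ∧
    pb (Ae 0) (Ae 2) = -Ae 1 ∧
    pb (Ae 1) (Ae 2) = Ae 0 ∧
    pb (Ae 0) (Ae 3) = 2 * Ae 1 * Ae 2 ∧
    pb (Ae 1) (Ae 3) = -2 * Ae 0 * Ae 2 ∧
    pb (Ae 2) (Ae 3) = 0 := by
  refine ⟨fun j => ?_, fun j => ?_, ?_, ?_, ?_, ?_, ?_, ?_⟩
  all_goals try fin_cases j
  all_goals
    simp only [Fin.zero_eta, Fin.mk_one, Fin.reduceFinMk, pb_eq_pderivBracket, Ae,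
      Matrix.cons_val, pow_two, pderivBracket_add_left, pderivBracket_add_right,
      pderivBracket_sub_left, pderivBracket_sub_right, pderivBracket_mul_left,
      pderivBracket_mul_right, pderivBracket_ofNat_left, pderivBracket_ofNat_right,
      pderivBracket_X_X, c2Mat, Matrix.of_apply] <;>
    ring
end
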